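/- Let U be a compact metric space with probability measure η, 0 < a < 1 < b, and S_{a,b} the set of measurable σ : U → [a,b] with ∫_U σ dη = 1. Let J : ℝ^d × U × ℝ^d × U → ℝ be bounded and Lipschitz with sup-norm bound ‖J‖_∞. Define f^J(x,σ,x',σ')(u) = [∫_U J(x,u,x',u')σ'(u') dη(u') − ∫_U ∫_U J(x,v,x',u')σ'(u')σ(v) dη(u')dη(v)] · σ(u). Then f^J is Lipschitz in all four arguments: there exists L = L(J,b) such that for all x_i, x_i' ∈ ℝ^d and σ_i, σ_i' ∈ S_{a,b} (i = 1,2), ‖f^J(x₂,σ₂,x₂',σ₂') − f^J(x₁,σ₁,x₁',σ₁')‖_{L^p_η} ≤ L(‖x₂−x₁‖ + ‖σ₂−σ₁‖_{L^p_η} + ‖x₂'−x₁'‖ + ‖σ₂'−σ₁'‖_{L^p_η}). -/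

import Mathlib

/-!
Write `A(u) = ∫ J(x,u,x',u') σ'(u') dη(u')` and `B = ∫ A σ dη`, so that `f^J = (A - B) σ`.
Three times (for the integrand `J σ'`, for `A σ` and for `(A - B) σ`) a difference of products
is split as `a₁ c₁ - a₂ c₂ = (a₁ - a₂) c₁ + a₂ (c₁ - c₂)` and estimated with `|J| ≤ ‖J‖_∞` and
`|σ| ≤ b`. This gives the pointwise bound `|Δf^J(u)| ≤ C + (b + b²) ‖J‖_∞ |Δσ(u)|` with `C`
linear in `‖Δx‖`, `‖Δx'‖` and the `L¹` norms of `Δσ`, `Δσ'`; Minkowski's inequality and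
`‖·‖_{L¹} ≤ ‖·‖_{L^p}` (η is a probability measure) carry it over to `L^p`. Measurability of `A`
comes from its Lipschitz continuity in `u`, inherited from that of `J`.
-/

open MeasureTheory Real

/-- The replicator interaction term `f^J`. -/
noncomputable def replicatorField {U : Type*} [MeasurableSpace U] {d : ℕ}
    (η : Measure U)
    (J : EuclideanSpace ℝ (Fin d) → U → EuclideanSpace ℝ (Fin d) → U → ℝ)
    (x : EuclideanSpace ℝ (Fin d)) (σ : U → ℝ)
    (x' : EuclideanSpace ℝ (Fin d)) (σ' : U → ℝ) (u : U) : ℝ :=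
  ((∫ u', J x u x' u' * σ' u' ∂η)
    - ∫ v, (∫ u', J x v x' u' * σ' u' ∂η) * σ v ∂η) * σ u

open scoped ENNReal

section LpNorm

variable {α : Type*} {m : MeasurableSpace α} {μ : Measure α}

theorem lpNorm_ofReal_eq_integral_abs_rpow {f : α → ℝ} {p : ℝ} (hp : 0 < p)
    (hf : AEStronglyMeasurable f μ) :
    lpNorm f (ENNReal.ofReal p) μ = (∫ x, |f x| ^ p ∂μ) ^ (1 / p) := by
  rw [lpNorm_eq_integral_norm_rpow_toReal (by simpa using hp) ENNReal.ofReal_ne_top hf,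
    ENNReal.toReal_ofReal hp.le, one_div]
  simp only [Real.norm_eq_abs]

theorem lpNorm_le_lpNorm_of_exponent_le [IsProbabilityMeasure μ] {f : α → ℝ} {p q : ℝ≥0∞}
    (hpq : p ≤ q) (hf : MemLp f q μ) : lpNorm f p μ ≤ lpNorm f q μ := by
  rw [← toReal_eLpNorm hf.aestronglyMeasurable, ← toReal_eLpNorm hf.aestronglyMeasurable]
  exact ENNReal.toReal_mono hf.eLpNorm_ne_top
    (eLpNorm_le_eLpNorm_of_exponent_le hpq hf.aestronglyMeasurable)

theorem lpNorm_le_add_mul_lpNorm_of_abs_le [IsProbabilityMeasure μ] {f g : α → ℝ}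
    {p : ℝ≥0∞} {c e : ℝ} (hp : 1 ≤ p) (hc : 0 ≤ c) (he : 0 ≤ e) (hg : MemLp g p μ)
    (hfg : ∀ x, |f x| ≤ c + e * |g x|) : lpNorm f p μ ≤ c + e * lpNorm g p μ := by
  have hp0 : p ≠ 0 := (zero_lt_one.trans_le hp).ne'
  calc lpNorm f p μ ≤ lpNorm ((fun _ ↦ c) + e • fun x ↦ |g x|) p μ :=
        lpNorm_mono_real ((memLp_const c).add (hg.abs.const_smul e)) hfg
    _ ≤ lpNorm (fun _ ↦ c) p μ + lpNorm (e • fun x ↦ |g x|) p μ :=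
        lpNorm_add_le (memLp_const c) hp
    _ = c + e * lpNorm g p μ := by
        rw [lpNorm_const hp0 (IsProbabilityMeasure.ne_zero μ), lpNorm_const_smul,
          lpNorm_fun_abs hg.aestronglyMeasurable]
        simp [abs_of_nonneg hc, abs_of_nonneg he]

theorem integral_abs_le_lpNorm [IsProbabilityMeasure μ] {f : α → ℝ} {p : ℝ≥0∞} (hp : 1 ≤ p)
    (hf : MemLp f p μ) : ∫ x, |f x| ∂μ ≤ lpNorm f p μ := by
  simpa [lpNorm_one_eq_integral_norm hf.aestronglyMeasurable] using
    lpNorm_le_lpNorm_of_exponent_le hp hf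

end LpNorm

theorem abs_mul_sub_mul_le {a₁ a₂ c₁ c₂ ε M b : ℝ} (ha : |a₁ - a₂| ≤ ε) (ha₂ : |a₂| ≤ M)
    (hc₁ : |c₁| ≤ b) : |a₁ * c₁ - a₂ * c₂| ≤ ε * b + M * |c₁ - c₂| :=
  calc |a₁ * c₁ - a₂ * c₂| = |(a₁ - a₂) * c₁ + a₂ * (c₁ - c₂)| := by ring_nf
    _ ≤ |a₁ - a₂| * |c₁| + |a₂| * |c₁ - c₂| := by
        rw [← abs_mul, ← abs_mul]; exact abs_add_le _ _
    _ ≤ ε * b + M * |c₁ - c₂| := by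
        gcongr
        exact (abs_nonneg _).trans ha

section IntegralMul

variable {α : Type*} {m : MeasurableSpace α} {μ : Measure α} [IsProbabilityMeasure μ]
  {f f₁ f₂ g g₁ g₂ : α → ℝ} {ε M b : ℝ}

omit [IsProbabilityMeasure μ] in
theorem abs_mul_le_of_abs_le (hf : ∀ x, |f x| ≤ M) (hg : ∀ x, |g x| ≤ b) (x : α) :
    |f x * g x| ≤ M * b := by
  rw [abs_mul]
  exact mul_le_mul (hf x) (hg x) (abs_nonneg _) ((abs_nonneg _).trans (hf x))

theorem abs_integral_mul_le (hf : ∀ x, |f x| ≤ M) (hg : ∀ x, |g x| ≤ b) :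
    |∫ x, f x * g x ∂μ| ≤ M * b := by
  simpa using norm_integral_le_of_norm_le_const (μ := μ) (f := fun x ↦ f x * g x)
    (.of_forall (abs_mul_le_of_abs_le hf hg))

theorem integrable_mul_of_abs_le (hf : AEStronglyMeasurable f μ) (hg : AEStronglyMeasurable g μ)
    (hfM : ∀ x, |f x| ≤ M) (hgb : ∀ x, |g x| ≤ b) : Integrable (fun x ↦ f x * g x) μ :=
  .of_bound (hf.mul hg) (M * b) (.of_forall (abs_mul_le_of_abs_le hfM hgb))

theorem abs_integral_mul_sub_integral_mul_le (hf₁ : AEStronglyMeasurable f₁ μ)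
    (hf₂ : AEStronglyMeasurable f₂ μ) (hg₁ : AEStronglyMeasurable g₁ μ)
    (hg₂ : AEStronglyMeasurable g₂ μ) (hf : ∀ x, |f₁ x - f₂ x| ≤ ε) (hf₂M : ∀ x, |f₂ x| ≤ M)
    (hg₁b : ∀ x, |g₁ x| ≤ b) (hg₂b : ∀ x, |g₂ x| ≤ b) :
    |∫ x, f₁ x * g₁ x ∂μ - ∫ x, f₂ x * g₂ x ∂μ| ≤ ε * b + M * ∫ x, |g₁ x - g₂ x| ∂μ := by
  have hf₁M : ∀ x, |f₁ x| ≤ ε + M := fun x ↦ by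
    linarith [abs_sub_abs_le_abs_sub (f₁ x) (f₂ x), hf x, hf₂M x]
  have hΔg : Integrable (fun x ↦ |g₁ x - g₂ x|) μ :=
    .of_bound (hg₁.sub hg₂).norm (b + b) <| .of_forall fun x ↦ by
      rw [Real.norm_eq_abs, abs_abs]
      linarith [abs_sub (g₁ x) (g₂ x), hg₁b x, hg₂b x]
  rw [← integral_sub (integrable_mul_of_abs_le hf₁ hg₁ hf₁M hg₁b)
    (integrable_mul_of_abs_le hf₂ hg₂ hf₂M hg₂b)]
  calc |∫ x, (f₁ x * g₁ x - f₂ x * g₂ x) ∂μ|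
      ≤ ∫ x, (ε * b + M * |g₁ x - g₂ x|) ∂μ :=
        norm_integral_le_of_norm_le (f := fun x ↦ f₁ x * g₁ x - f₂ x * g₂ x)
          ((integrable_const (ε * b)).add (hΔg.const_mul M))
          (.of_forall fun x ↦ abs_mul_sub_mul_le (hf x) (hf₂M x) (hg₁b x))
    _ = ε * b + M * ∫ x, |g₁ x - g₂ x| ∂μ := by
        rw [integral_add (integrable_const _) (hΔg.const_mul M), integral_const_mul M]
        simp

end IntegralMul

section Kernel

variable {U : Type*} [MeasurableSpace U] (η : Measure U)

noncomputable def kernelAverage (k : U → U → ℝ) (σ : U → ℝ) (u : U) : ℝ :=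
  ∫ u', k u u' * σ u' ∂η

noncomputable def kernelReplicatorField (k : U → U → ℝ) (σ σ' : U → ℝ) (u : U) : ℝ :=
  (kernelAverage η k σ' u - ∫ v, kernelAverage η k σ' v * σ v ∂η) * σ u

theorem replicatorField_eq_kernelReplicatorField {d : ℕ}
    (J : EuclideanSpace ℝ (Fin d) → U → EuclideanSpace ℝ (Fin d) → U → ℝ)
    (x : EuclideanSpace ℝ (Fin d)) (σ : U → ℝ) (x' : EuclideanSpace ℝ (Fin d)) (σ' : U → ℝ) :
    replicatorField η J x σ x' σ' = kernelReplicatorField η (fun u u' ↦ J x u x' u') σ σ' :=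
  rfl

variable {η} [IsProbabilityMeasure η] {k₁ k₂ : U → U → ℝ} {σ₁ σ₂ σ₁' σ₂' : U → ℝ}
  {ε M b : ℝ}

theorem abs_kernelReplicatorField_sub_le (hk₁ : ∀ u, AEStronglyMeasurable (k₁ u) η)
    (hk₂ : ∀ u, AEStronglyMeasurable (k₂ u) η)
    (hA₁ : AEStronglyMeasurable (kernelAverage η k₁ σ₁') η)
    (hA₂ : AEStronglyMeasurable (kernelAverage η k₂ σ₂') η)
    (hσ₁ : AEStronglyMeasurable σ₁ η) (hσ₂ : AEStronglyMeasurable σ₂ η)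
    (hσ₁' : AEStronglyMeasurable σ₁' η) (hσ₂' : AEStronglyMeasurable σ₂' η)
    (hk : ∀ u u', |k₁ u u' - k₂ u u'| ≤ ε) (hk₂M : ∀ u u', |k₂ u u'| ≤ M)
    (hσ₁b : ∀ u, |σ₁ u| ≤ b) (hσ₂b : ∀ u, |σ₂ u| ≤ b)
    (hσ₁'b : ∀ u, |σ₁' u| ≤ b) (hσ₂'b : ∀ u, |σ₂' u| ≤ b) (u : U) :
    |kernelReplicatorField η k₁ σ₁ σ₁' u - kernelReplicatorField η k₂ σ₂ σ₂' u|
      ≤ ((1 + b) * (ε * b + M * ∫ v, |σ₁' v - σ₂' v| ∂η) + M * b * ∫ v, |σ₁ v - σ₂ v| ∂η) * b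
        + (M * b + M * b * b) * |σ₁ u - σ₂ u| := by
  have hA (v : U) : |kernelAverage η k₁ σ₁' v - kernelAverage η k₂ σ₂' v|
      ≤ ε * b + M * ∫ v, |σ₁' v - σ₂' v| ∂η :=
    abs_integral_mul_sub_integral_mul_le (hk₁ v) (hk₂ v) hσ₁' hσ₂' (hk v) (hk₂M v) hσ₁'b hσ₂'b
  have hA₂M (v : U) : |kernelAverage η k₂ σ₂' v| ≤ M * b := abs_integral_mul_le (hk₂M v) hσ₂'b
  have hB := abs_integral_mul_sub_integral_mul_le hA₁ hA₂ hσ₁ hσ₂ hA hA₂M hσ₁b hσ₂b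
  have hB₂ := abs_integral_mul_le (μ := η) hA₂M hσ₂b
  refine abs_mul_sub_mul_le ?_ ?_ (hσ₁b u)
  · calc _ = |(kernelAverage η k₁ σ₁' u - kernelAverage η k₂ σ₂' u)
            - ((∫ v, kernelAverage η k₁ σ₁' v * σ₁ v ∂η)
              - ∫ v, kernelAverage η k₂ σ₂' v * σ₂ v ∂η)| := by ring_nf
      _ ≤ _ := (abs_sub _ _).trans (by linarith [hA u])
  · exact (abs_sub _ _).trans (add_le_add (hA₂M u) hB₂)

end Kernel

section MetricKernel

variable {U : Type*} [PseudoMetricSpace U] [MeasurableSpace U] [OpensMeasurableSpace U]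
  {η : Measure U} [IsProbabilityMeasure η] {k k₁ k₂ : U → U → ℝ}
  {σ σ' σ₁ σ₂ σ₁' σ₂' : U → ℝ}
  {ε K M b : ℝ}

omit [MeasurableSpace U] [OpensMeasurableSpace U] in
theorem continuous_kernel_right
    (hk : ∀ u₁ u₂ u₁' u₂', |k u₁ u₁' - k u₂ u₂'| ≤ K * (dist u₁ u₂ + dist u₁' u₂')) (u : U) :
    Continuous (k u) :=
  (LipschitzWith.of_dist_le' (K := K) fun u₁' u₂' ↦ by
    simpa [Real.dist_eq] using hk u u u₁' u₂').continuous

theorem lipschitzWith_kernelAverage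
    (hk : ∀ u₁ u₂ u₁' u₂', |k u₁ u₁' - k u₂ u₂'| ≤ K * (dist u₁ u₂ + dist u₁' u₂'))
    (hkM : ∀ u u', |k u u'| ≤ M) (hσ : AEStronglyMeasurable σ η) (hσb : ∀ u, |σ u| ≤ b) :
    LipschitzWith (K * b).toNNReal (kernelAverage η k σ) :=
  LipschitzWith.of_dist_le' fun u₁ u₂ ↦ by
    have h := abs_integral_mul_sub_integral_mul_le
      (continuous_kernel_right hk u₁).aestronglyMeasurable
      (continuous_kernel_right hk u₂).aestronglyMeasurable hσ hσ
      (fun u' ↦ by simpa using hk u₁ u₂ u' u') (hkM u₂) hσb hσb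
    simpa [Real.dist_eq, kernelAverage, mul_right_comm] using h

theorem aestronglyMeasurable_kernelReplicatorField
    (hk : ∀ u₁ u₂ u₁' u₂', |k u₁ u₁' - k u₂ u₂'| ≤ K * (dist u₁ u₂ + dist u₁' u₂'))
    (hkM : ∀ u u', |k u u'| ≤ M) (hσ : AEStronglyMeasurable σ η)
    (hσ' : AEStronglyMeasurable σ' η) (hσ'b : ∀ u, |σ' u| ≤ b) :
    AEStronglyMeasurable (kernelReplicatorField η k σ σ') η :=
  (((lipschitzWith_kernelAverage hk hkM hσ' hσ'b).continuous.aestronglyMeasurable).sub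
    aestronglyMeasurable_const).mul hσ

theorem lpNorm_kernelReplicatorField_sub_le {p : ℝ≥0∞} (hp : 1 ≤ p)
    (hk₁ : ∀ u₁ u₂ u₁' u₂', |k₁ u₁ u₁' - k₁ u₂ u₂'| ≤ K * (dist u₁ u₂ + dist u₁' u₂'))
    (hk₂ : ∀ u₁ u₂ u₁' u₂', |k₂ u₁ u₁' - k₂ u₂ u₂'| ≤ K * (dist u₁ u₂ + dist u₁' u₂'))
    (hk : ∀ u u', |k₁ u u' - k₂ u u'| ≤ ε)
    (hk₁M : ∀ u u', |k₁ u u'| ≤ M) (hk₂M : ∀ u u', |k₂ u u'| ≤ M)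
    (hσ₁ : AEStronglyMeasurable σ₁ η) (hσ₂ : AEStronglyMeasurable σ₂ η)
    (hσ₁' : AEStronglyMeasurable σ₁' η) (hσ₂' : AEStronglyMeasurable σ₂' η)
    (hσ₁b : ∀ u, |σ₁ u| ≤ b) (hσ₂b : ∀ u, |σ₂ u| ≤ b)
    (hσ₁'b : ∀ u, |σ₁' u| ≤ b) (hσ₂'b : ∀ u, |σ₂' u| ≤ b) :
    lpNorm (fun u ↦ kernelReplicatorField η k₁ σ₁ σ₁' u - kernelReplicatorField η k₂ σ₂ σ₂' u)
        p η
      ≤ ((1 + b) * (ε * b + M * lpNorm (fun u ↦ σ₁' u - σ₂' u) p η)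
          + M * b * lpNorm (fun u ↦ σ₁ u - σ₂ u) p η) * b
        + (M * b + M * b * b) * lpNorm (fun u ↦ σ₁ u - σ₂ u) p η := by
  obtain ⟨u₀⟩ := nonempty_of_isProbabilityMeasure η
  have hb : 0 ≤ b := (abs_nonneg _).trans (hσ₁b u₀)
  have hM : 0 ≤ M := (abs_nonneg _).trans (hk₂M u₀ u₀)
  have hε : 0 ≤ ε := (abs_nonneg _).trans (hk u₀ u₀)
  have hmem {f g : U → ℝ} (hf : AEStronglyMeasurable f η) (hg : AEStronglyMeasurable g η)
      (hfb : ∀ u, |f u| ≤ b) (hgb : ∀ u, |g u| ≤ b) : MemLp (fun u ↦ f u - g u) p η :=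
    .of_bound (hf.sub hg) (b + b) <| .of_forall fun u ↦
      (abs_sub (f u) (g u)).trans (add_le_add (hfb u) (hgb u))
  have hpt := abs_kernelReplicatorField_sub_le
    (fun u ↦ (continuous_kernel_right hk₁ u).aestronglyMeasurable)
    (fun u ↦ (continuous_kernel_right hk₂ u).aestronglyMeasurable)
    (lipschitzWith_kernelAverage hk₁ hk₁M hσ₁' hσ₁'b).continuous.aestronglyMeasurable
    (lipschitzWith_kernelAverage hk₂ hk₂M hσ₂' hσ₂'b).continuous.aestronglyMeasurable
    hσ₁ hσ₂ hσ₁' hσ₂' hk hk₂M hσ₁b hσ₂b hσ₁'b hσ₂'b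
  have hI := integral_abs_le_lpNorm hp (hmem hσ₁ hσ₂ hσ₁b hσ₂b)
  have hI' := integral_abs_le_lpNorm hp (hmem hσ₁' hσ₂' hσ₁'b hσ₂'b)
  refine (lpNorm_le_add_mul_lpNorm_of_abs_le hp (by positivity) (by positivity)
    (hmem hσ₁ hσ₂ hσ₁b hσ₂b) hpt).trans ?_
  gcongr

end MetricKernel

theorem replicatorField_lipschitz_general
    {U : Type*} [MetricSpace U] [MeasurableSpace U] [BorelSpace U]
    {d : ℕ} (η : Measure U) [IsProbabilityMeasure η]
    (a b : ℝ) (ha : 0 < a) (hb : 1 < b)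
    (J : EuclideanSpace ℝ (Fin d) → U → EuclideanSpace ℝ (Fin d) → U → ℝ)
    (MJ K : ℝ) (hMJ : 0 ≤ MJ) (hK : 0 ≤ K)
    (hJb : ∀ x u x' u', |J x u x' u'| ≤ MJ)
    (hJL : ∀ x₁ x₂ u₁ u₂ x₁' x₂' u₁' u₂',
      |J x₁ u₁ x₁' u₁' - J x₂ u₂ x₂' u₂'|
        ≤ K * (‖x₁ - x₂‖ + dist u₁ u₂ + ‖x₁' - x₂'‖ + dist u₁' u₂')) :
    ∃ L : ℝ, 0 < L ∧
      ∀ (p : ℝ), 1 ≤ p →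
      ∀ (x₁ x₂ x₁' x₂' : EuclideanSpace ℝ (Fin d)) (σ₁ σ₂ σ₁' σ₂' : U → ℝ),
        Measurable σ₁ → Measurable σ₂ → Measurable σ₁' → Measurable σ₂' →
        (∀ u, σ₁ u ∈ Set.Icc a b) → (∀ u, σ₂ u ∈ Set.Icc a b) →
        (∀ u, σ₁' u ∈ Set.Icc a b) → (∀ u, σ₂' u ∈ Set.Icc a b) →
        (∫ u, σ₁ u ∂η) = 1 → (∫ u, σ₂ u ∂η) = 1 →
        (∫ u, σ₁' u ∂η) = 1 → (∫ u, σ₂' u ∂η) = 1 →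
        (∫ u, |replicatorField η J x₂ σ₂ x₂' σ₂' u
              - replicatorField η J x₁ σ₁ x₁' σ₁' u| ^ p ∂η) ^ (1 / p)
          ≤ L * (‖x₂ - x₁‖ + (∫ u, |σ₂ u - σ₁ u| ^ p ∂η) ^ (1 / p)
              + ‖x₂' - x₁'‖ + (∫ u, |σ₂' u - σ₁' u| ^ p ∂η) ^ (1 / p)) := by
  refine ⟨b * (1 + 2 * b) * (K * b + MJ + 1), by positivity, ?_⟩
  intro p hp x₁ x₂ x₁' x₂' σ₁ σ₂ σ₁' σ₂' hσ₁ hσ₂ hσ₁' hσ₂' hr₁ hr₂ hr₁' hr₂' _ _ _ _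
  have habs {σ : U → ℝ} (h : ∀ u, σ u ∈ Set.Icc a b) (u : U) : |σ u| ≤ b :=
    abs_le.2 ⟨by linarith [(h u).1], (h u).2⟩
  have hk (x x' : EuclideanSpace ℝ (Fin d)) (u₁ u₂ u₁' u₂' : U) :
      |J x u₁ x' u₁' - J x u₂ x' u₂'| ≤ K * (dist u₁ u₂ + dist u₁' u₂') := by
    simpa using hJL x x u₁ u₂ x' x' u₁' u₂'
  have hΔk (u u' : U) :
      |J x₂ u x₂' u' - J x₁ u x₁' u'| ≤ K * (‖x₂ - x₁‖ + ‖x₂' - x₁'‖) := by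
    simpa [add_right_comm] using hJL x₂ x₁ u u x₂' x₁' u' u'
  have hp0 : 0 < p := by linarith
  simp only [replicatorField_eq_kernelReplicatorField]
  rw [← lpNorm_ofReal_eq_integral_abs_rpow (f := fun u ↦ σ₂ u - σ₁ u) hp0
      (hσ₂.sub hσ₁).aestronglyMeasurable,
    ← lpNorm_ofReal_eq_integral_abs_rpow (f := fun u ↦ σ₂' u - σ₁' u) hp0
      (hσ₂'.sub hσ₁').aestronglyMeasurable,
    ← lpNorm_ofReal_eq_integral_abs_rpow (f := fun u ↦
      kernelReplicatorField η (fun u u' ↦ J x₂ u x₂' u') σ₂ σ₂' u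
        - kernelReplicatorField η (fun u u' ↦ J x₁ u x₁' u') σ₁ σ₁' u) hp0
      ((aestronglyMeasurable_kernelReplicatorField (hk x₂ x₂') (hJb _ · _ ·)
        hσ₂.aestronglyMeasurable hσ₂'.aestronglyMeasurable (habs hr₂')).sub
      (aestronglyMeasurable_kernelReplicatorField (hk x₁ x₁') (hJb _ · _ ·)
        hσ₁.aestronglyMeasurable hσ₁'.aestronglyMeasurable (habs hr₁')))]
  refine (lpNorm_kernelReplicatorField_sub_le (by simpa using hp) (hk x₂ x₂') (hk x₁ x₁') hΔk
    (hJb _ · _ ·) (hJb _ · _ ·) hσ₂.aestronglyMeasurable hσ₁.aestronglyMeasurable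
    hσ₂'.aestronglyMeasurable hσ₁'.aestronglyMeasurable
    (habs hr₂) (habs hr₁) (habs hr₂') (habs hr₁')).trans ?_
  set P := lpNorm (fun u ↦ σ₂ u - σ₁ u) (ENNReal.ofReal p) η
  set P' := lpNorm (fun u ↦ σ₂' u - σ₁' u) (ENNReal.ofReal p) η
  have hP : 0 ≤ P := lpNorm_nonneg
  have hP' : 0 ≤ P' := lpNorm_nonneg
  have hKb : 0 ≤ K * b := by positivity
  calc _ = b * (1 + b) * (K * b) * (‖x₂ - x₁‖ + ‖x₂' - x₁'‖) + b * (1 + b) * MJ * P'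
        + b * (1 + 2 * b) * MJ * P := by ring
    _ ≤ b * (1 + 2 * b) * (K * b + MJ + 1) * (‖x₂ - x₁‖ + ‖x₂' - x₁'‖)
        + b * (1 + 2 * b) * (K * b + MJ + 1) * P' + b * (1 + 2 * b) * (K * b + MJ + 1) * P := by
      gcongr <;> linarith
    _ = _ := by ring

/-- `f^J` is Lipschitz in all four arguments with respect to the `L^p_η` norm. -/
theorem replicatorField_lipschitz
    {U : Type*} [MetricSpace U] [CompactSpace U] [MeasurableSpace U] [BorelSpace U]
    {d : ℕ} (η : Measure U) [IsProbabilityMeasure η]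
    (a b : ℝ) (ha : 0 < a) (ha1 : a < 1) (hb : 1 < b)
    (J : EuclideanSpace ℝ (Fin d) → U → EuclideanSpace ℝ (Fin d) → U → ℝ)
    (MJ K : ℝ) (hMJ : 0 ≤ MJ) (hK : 0 ≤ K)
    (hJb : ∀ x u x' u', |J x u x' u'| ≤ MJ)
    (hJL : ∀ x₁ x₂ u₁ u₂ x₁' x₂' u₁' u₂',
      |J x₁ u₁ x₁' u₁' - J x₂ u₂ x₂' u₂'|
        ≤ K * (‖x₁ - x₂‖ + dist u₁ u₂ + ‖x₁' - x₂'‖ + dist u₁' u₂')) :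
    ∃ L : ℝ, 0 < L ∧
      ∀ (p : ℝ), 1 ≤ p →
      ∀ (x₁ x₂ x₁' x₂' : EuclideanSpace ℝ (Fin d)) (σ₁ σ₂ σ₁' σ₂' : U → ℝ),
        Measurable σ₁ → Measurable σ₂ → Measurable σ₁' → Measurable σ₂' →
        (∀ u, σ₁ u ∈ Set.Icc a b) → (∀ u, σ₂ u ∈ Set.Icc a b) →
        (∀ u, σ₁' u ∈ Set.Icc a b) → (∀ u, σ₂' u ∈ Set.Icc a b) →
        (∫ u, σ₁ u ∂η) = 1 → (∫ u, σ₂ u ∂η) = 1 →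
        (∫ u, σ₁' u ∂η) = 1 → (∫ u, σ₂' u ∂η) = 1 →
        (∫ u, |replicatorField η J x₂ σ₂ x₂' σ₂' u
              - replicatorField η J x₁ σ₁ x₁' σ₁' u| ^ p ∂η) ^ (1 / p)
          ≤ L * (‖x₂ - x₁‖ + (∫ u, |σ₂ u - σ₁ u| ^ p ∂η) ^ (1 / p)
              + ‖x₂' - x₁'‖ + (∫ u, |σ₂' u - σ₁' u| ^ p ∂η) ^ (1 / p)) :=
  replicatorField_lipschitz_general η a b ha hb J MJ K hMJ hK hJb hJL
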